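/- Let n ≥ 6 and let Γ' be a signed graph of order n that attains the maximum largest eigenvalue λ1 among all unbalanced, negative-C4-free signed graphs of order n, and suppose A(Γ') has a nonnegative unit eigenvector corresponding to λ1(Γ'). Then Γ' contains a negative cycle of length 3; equivalently, the shortest negative cycle of Γ' has length 3. -/

import Mathlib

open scoped BigOperators

/-- A signed graph on the vertex set `Fin n`: a simple graph together with a
symmetric `±1` sign on each edge. -/
structure SignedGraph (n : ℕ) where
  G : SimpleGraph (Fin n)
  sign : Fin n → Fin n → ℤ
  sign_symm : ∀ i j, sign i j = sign j i
  sign_pm : ∀ i j, G.Adj i j → sign i j = 1 ∨ sign i j = -1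

namespace SignedGraph

variable {n : ℕ}

open Classical in
/-- The adjacency matrix of a signed graph, as a real matrix. -/
noncomputable def adjMatrix (Γ : SignedGraph n) : Matrix (Fin n) (Fin n) ℝ :=
  fun i j => if Γ.G.Adj i j then (Γ.sign i j : ℝ) else 0

/-- The largest eigenvalue (the index) of a signed graph. -/
noncomputable def lambda1 (Γ : SignedGraph n) : ℝ :=
  sSup (spectrum ℝ Γ.adjMatrix)

/-- The sign of an unordered edge. -/
def signEdge (Γ : SignedGraph n) : Sym2 (Fin n) → ℤ :=
  Sym2.lift ⟨Γ.sign, Γ.sign_symm⟩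

/-- The sign of a walk: the product of the signs of its edges. -/
def walkSign (Γ : SignedGraph n) {u v : Fin n} (w : Γ.G.Walk u v) : ℤ :=
  (w.edges.map Γ.signEdge).prod

/-- A negative cycle: a cycle whose sign is `-1`
(equivalently, with an odd number of negative edges). -/
def IsNegCycle (Γ : SignedGraph n) {u : Fin n} (c : Γ.G.Walk u u) : Prop :=
  c.IsCycle ∧ Γ.walkSign c = -1

/-- A signed graph is unbalanced if it contains a negative cycle. -/
def Unbalanced (Γ : SignedGraph n) : Prop :=
  ∃ (u : Fin n) (c : Γ.G.Walk u u), Γ.IsNegCycle c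

/-- A signed graph is negative-`C₄`-free if it contains no negative 4-cycle. -/
def NegC4Free (Γ : SignedGraph n) : Prop :=
  ∀ (u : Fin n) (c : Γ.G.Walk u u), c.IsCycle → c.length = 4 → Γ.walkSign c ≠ -1

end SignedGraph

/-- The signed graph `Γ₁`: vertices `2,…,n-1` induce an all-positive complete
graph, vertices `0` and `1` are joined to each other by a negative edge and to
vertex `2` by positive edges, and have no other neighbours. -/
def Gamma1 (n : ℕ) : SignedGraph n where
  G :=
    { Adj := fun i j => i ≠ j ∧ (2 ≤ min i.val j.val ∨ max i.val j.val ≤ 2)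
      symm := by
        constructor
        intro i j h
        refine ⟨Ne.symm h.1, ?_⟩
        rw [min_comm, max_comm]
        exact h.2
      loopless := by constructor; intro i h; exact h.1 rfl }
  sign := fun i j =>
    if (i.val = 0 ∧ j.val = 1) ∨ (i.val = 1 ∧ j.val = 0) then -1 else 1
  sign_symm := by
    intro i j
    try dsimp only
    by_cases h : (i.val = 0 ∧ j.val = 1) ∨ (i.val = 1 ∧ j.val = 0)
    · rw [if_pos h, if_pos (by tauto)]
    · rw [if_neg h, if_neg (by tauto)]
  sign_pm := by
    intro i j _
    try dsimp only
    by_cases h : (i.val = 0 ∧ j.val = 1) ∨ (i.val = 1 ∧ j.val = 0)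
    · rw [if_pos h]; right; rfl
    · rw [if_neg h]; left; rfl

/-- The signed graph `Γ₂`: vertices `4,…,n-1` induce an all-positive complete
graph, vertices `2` and `3` are joined by positive edges to all of `4,…,n-1`
(but not to each other), vertices `0` and `1` are joined to each other by a
negative edge and to `2` and `3` by positive edges, and have no other
neighbours. -/
def Gamma2 (n : ℕ) : SignedGraph n where
  G :=
    { Adj := fun i j => i ≠ j ∧
        ((i.val ≤ 1 ∧ j.val ≤ 3) ∨ (j.val ≤ 1 ∧ i.val ≤ 3) ∨
         (2 ≤ i.val ∧ i.val ≤ 3 ∧ 4 ≤ j.val) ∨ (2 ≤ j.val ∧ j.val ≤ 3 ∧ 4 ≤ i.val) ∨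
         (4 ≤ i.val ∧ 4 ≤ j.val))
      symm := by
        constructor
        intro i j h
        exact ⟨Ne.symm h.1, by tauto⟩
      loopless := by constructor; intro i h; exact h.1 rfl }
  sign := fun i j =>
    if (i.val = 0 ∧ j.val = 1) ∨ (i.val = 1 ∧ j.val = 0) then -1 else 1
  sign_symm := by
    intro i j
    try dsimp only
    by_cases h : (i.val = 0 ∧ j.val = 1) ∨ (i.val = 1 ∧ j.val = 0)
    · rw [if_pos h, if_pos (by tauto)]
    · rw [if_neg h, if_neg (by tauto)]
  sign_pm := by
    intro i j _
    try dsimp only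
    by_cases h : (i.val = 0 ∧ j.val = 1) ∨ (i.val = 1 ∧ j.val = 0)
    · rw [if_pos h]; right; rfl
    · rw [if_neg h]; left; rfl


/-- The all-negative complete signed graph `(K_n, -)`. -/
def NegKn (n : ℕ) : SignedGraph n where
  G := ⊤
  sign := fun _ _ => -1
  sign_symm := fun _ _ => rfl
  sign_pm := fun _ _ _ => Or.inr rfl

/-- `Γ` is switching equivalent to `Γ'` (up to a relabelling of the vertices):
there is a bijection of the vertices matching the underlying graphs and a
`±1`-valued switching function `s` relating the two sign functions. -/
def SwitchingEquiv {n : ℕ} (Γ Γ' : SignedGraph n) : Prop :=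
  ∃ e : Fin n ≃ Fin n, ∃ s : Fin n → ℤ, (∀ i, s i = 1 ∨ s i = -1) ∧
    (∀ i j, Γ.G.Adj i j ↔ Γ'.G.Adj (e i) (e j)) ∧
    (∀ i j, Γ.G.Adj i j → Γ.sign i j = s i * Γ'.sign (e i) (e j) * s j)

/-!
Suppose `Γ'` has no negative triangle. If some vertex `v` had at most one non-neighbour, the
non-neighbours of `v` would be independent; switching every vertex by the sign of a path of
length at most two from `v` then makes every edge positive, because triangles and 4-cycles
through `v` are positive. So `Γ'` would be balanced. Hence every degree of `Γ'` is at most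
`n - 3`, and so is `λ₁(Γ')`. But `Γ₁` is unbalanced, has no negative 4-cycle and satisfies
`λ₁(Γ₁) > n - 3`, contradicting the maximality of `Γ'`.
-/

namespace SimpleGraph

variable {V : Type*}

lemma Walk.isCycle_triangle {G : SimpleGraph V} {a b c : V} (hab : G.Adj a b) (hbc : G.Adj b c)
    (hca : G.Adj c a) : (cons hab (cons hbc (cons hca nil))).IsCycle := by
  simp [isCycle_def, isTrail_def, Sym2.eq, Sym2.rel_iff', hab.ne, hab.ne', hbc.ne, hca.ne,
    hca.ne']

lemma Walk.isCycle_square {G : SimpleGraph V} {a b c d : V} (hab : G.Adj a b) (hbc : G.Adj b c)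
    (hcd : G.Adj c d) (hda : G.Adj d a) (hac : a ≠ c) (hbd : b ≠ d) :
    (cons hab (cons hbc (cons hcd (cons hda nil)))).IsCycle := by
  simp [isCycle_def, isTrail_def, Sym2.eq, Sym2.rel_iff', hab.ne, hab.ne', hbc.ne, hcd.ne,
    hda.ne, hda.ne', hac, hac.symm, hbd]

lemma degree_add_card_le [Fintype V] [DecidableEq V] (G : SimpleGraph V) [DecidableRel G.Adj]
    (v : V) (s : Finset V) (hs : ∀ w ∈ s, ¬G.Adj v w) : G.degree v + s.card ≤ Fintype.card V := by
  rw [← card_neighborFinset_eq_degree, ← Finset.card_union_of_disjoint]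
  · exact Finset.card_le_univ _
  · exact Finset.disjoint_left.2 fun w hw hws => hs w hws ((G.mem_neighborFinset v w).1 hw)

end SimpleGraph

namespace Matrix

variable {ι : Type*} [Fintype ι] [DecidableEq ι]

lemma le_of_mem_spectrum_of_forall_sum_abs_le [Nonempty ι] {A : Matrix ι ι ℝ} {c : ℝ}
    (h : ∀ i, ∑ j, |A i j| ≤ c) {μ : ℝ} (hμ : μ ∈ spectrum ℝ A) : μ ≤ c := by
  let := Matrix.linftyOpNormedRing (n := ι) (α := ℝ)
  let := Matrix.linftyOpNormedAlgebra (R := ℝ) (n := ι) (α := ℝ)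
  have hc : 0 ≤ c := (Finset.sum_nonneg fun j _ => abs_nonneg _).trans (h (Classical.arbitrary ι))
  lift c to NNReal using hc
  have hA : ‖A‖ ≤ c := by
    rw [linfty_opNorm_def, NNReal.coe_le_coe]
    refine Finset.sup_le fun i _ => ?_
    rw [← NNReal.coe_le_coe]
    simpa using h i
  calc μ ≤ ‖μ‖ := Real.le_norm_self μ
    _ ≤ ‖A‖ := spectrum.norm_le_norm_of_mem hμ
    _ ≤ c := hA

open scoped MatrixOrder in
lemma dotProduct_mulVec_le_of_spectrum_le {A : Matrix ι ι ℝ} (hA : A.IsHermitian) {t : ℝ}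
    (ht : ∀ μ ∈ spectrum ℝ A, μ ≤ t) (y : ι → ℝ) : y ⬝ᵥ A *ᵥ y ≤ t * (y ⬝ᵥ y) := by
  have h := (le_iff.1 (le_algebraMap_of_spectrum_le ht)).dotProduct_mulVec_nonneg y
  simp [sub_mulVec, Algebra.algebraMap_eq_smul_one, smul_mulVec, dotProduct_sub] at h
  linarith

end Matrix

namespace SignedGraph

open SimpleGraph Matrix

variable {n : ℕ} (Γ : SignedGraph n)

def NegC3Free : Prop :=
  ∀ (u : Fin n) (c : Γ.G.Walk u u), c.IsCycle → c.length = 3 → Γ.walkSign c ≠ -1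

@[simp]
lemma walkSign_nil (u : Fin n) : Γ.walkSign (Walk.nil : Γ.G.Walk u u) = 1 := rfl

@[simp]
lemma walkSign_cons {u v w : Fin n} (h : Γ.G.Adj u v) (p : Γ.G.Walk v w) :
    Γ.walkSign (Walk.cons h p) = Γ.sign u v * Γ.walkSign p := by
  simp [walkSign, signEdge]

lemma sign_mul_self {u v : Fin n} (h : Γ.G.Adj u v) : Γ.sign u v * Γ.sign u v = 1 := by
  rcases Γ.sign_pm u v h with h | h <;> simp [h]

lemma walkSign_eq_mul_of_sign_eq_mul {s : Fin n → ℤ} (hs : ∀ i, s i * s i = 1)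
    (hσ : ∀ i j, Γ.G.Adj i j → Γ.sign i j = s i * s j) {u v : Fin n} (w : Γ.G.Walk u v) :
    Γ.walkSign w = s u * s v := by
  induction w with
  | nil => simp [hs]
  | @cons a b c h p ih => rw [walkSign_cons, ih, hσ a b h]; linear_combination s a * s c * hs b

lemma not_unbalanced_of_sign_eq_mul {s : Fin n → ℤ} (hs : ∀ i, s i * s i = 1)
    (hσ : ∀ i j, Γ.G.Adj i j → Γ.sign i j = s i * s j) : ¬Γ.Unbalanced := by
  rintro ⟨u, c, -, hc⟩
  have := Γ.walkSign_eq_mul_of_sign_eq_mul hs hσ c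
  rw [hc, hs u] at this
  norm_num at this

lemma unbalanced_of_triangle {a b c : Fin n} (hab : Γ.G.Adj a b) (hbc : Γ.G.Adj b c)
    (hca : Γ.G.Adj c a) (h : Γ.sign a b * Γ.sign b c * Γ.sign c a = -1) : Γ.Unbalanced :=
  ⟨a, _, Walk.isCycle_triangle hab hbc hca, by simpa [mul_assoc] using h⟩

variable {Γ}

lemma NegC3Free.sign_eq (h3 : Γ.NegC3Free) {a b c : Fin n} (hab : Γ.G.Adj a b)
    (hbc : Γ.G.Adj b c) (hca : Γ.G.Adj c a) : Γ.sign b c = Γ.sign a b * Γ.sign a c := by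
  have := h3 a _ (Walk.isCycle_triangle hab hbc hca) rfl
  rw [Γ.sign_symm a c]
  rcases Γ.sign_pm _ _ hab with h1 | h1 <;> rcases Γ.sign_pm _ _ hbc with h2 | h2 <;>
    rcases Γ.sign_pm _ _ hca with h3 | h3 <;> simp_all

lemma NegC4Free.sign_eq (h4 : Γ.NegC4Free) {a b c d : Fin n} (hab : Γ.G.Adj a b)
    (hbc : Γ.G.Adj b c) (hcd : Γ.G.Adj c d) (hda : Γ.G.Adj d a) (hac : a ≠ c) (hbd : b ≠ d) :
    Γ.sign c d = Γ.sign a b * Γ.sign b c * Γ.sign a d := by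
  have := h4 a _ (Walk.isCycle_square hab hbc hcd hda hac hbd) rfl
  rw [Γ.sign_symm a d]
  rcases Γ.sign_pm _ _ hab with h1 | h1 <;> rcases Γ.sign_pm _ _ hbc with h2 | h2 <;>
    rcases Γ.sign_pm _ _ hcd with h3 | h3 <;> rcases Γ.sign_pm _ _ hda with h4 | h4 <;> simp_all

variable (Γ)

/-- The switching function that makes every edge at `v` positive: a vertex at distance two from
`v` is switched by the sign of a (chosen) path of length two from `v`. -/
noncomputable def switchingAt (v w : Fin n) : ℤ :=
  open Classical in
  if Γ.G.Adj v w then Γ.sign v w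
  else if h : ∃ u, Γ.G.Adj v u ∧ Γ.G.Adj u w then Γ.sign v h.choose * Γ.sign h.choose w
  else 1

lemma switchingAt_of_adj {v w : Fin n} (h : Γ.G.Adj v w) : Γ.switchingAt v w = Γ.sign v w := by
  simp [switchingAt, h]

lemma exists_switchingAt_eq_of_not_adj {v w u : Fin n} (hw : ¬Γ.G.Adj v w) (hvu : Γ.G.Adj v u)
    (huw : Γ.G.Adj u w) :
    ∃ u, Γ.G.Adj v u ∧ Γ.G.Adj u w ∧ Γ.switchingAt v w = Γ.sign v u * Γ.sign u w := by
  have h : ∃ u, Γ.G.Adj v u ∧ Γ.G.Adj u w := ⟨u, hvu, huw⟩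
  exact ⟨h.choose, h.choose_spec.1, h.choose_spec.2, by simp [switchingAt, hw, h]⟩

lemma switchingAt_mul_self (v w : Fin n) : Γ.switchingAt v w * Γ.switchingAt v w = 1 := by
  by_cases hw : Γ.G.Adj v w
  · rw [switchingAt_of_adj Γ hw, sign_mul_self Γ hw]
  by_cases h : ∃ u, Γ.G.Adj v u ∧ Γ.G.Adj u w
  · obtain ⟨u, hvu, huw⟩ := h
    obtain ⟨u', hvu', hu'w, hs⟩ := Γ.exists_switchingAt_eq_of_not_adj hw hvu huw
    rw [hs]
    linear_combination (Γ.sign u' w * Γ.sign u' w) * Γ.sign_mul_self hvu' + Γ.sign_mul_self hu'w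
  · simp [switchingAt, hw, h]

variable {Γ}

lemma sign_eq_switchingAt_mul_of_not_adj (h4 : Γ.NegC4Free) {v a b : Fin n} (hab : Γ.G.Adj a b)
    (ha : ¬Γ.G.Adj v a) (hb : Γ.G.Adj v b) :
    Γ.sign a b = Γ.switchingAt v a * Γ.switchingAt v b := by
  obtain ⟨u, hvu, hua, hs⟩ := Γ.exists_switchingAt_eq_of_not_adj ha hb hab.symm
  rw [hs, Γ.switchingAt_of_adj hb]
  by_cases hub : u = b
  · subst hub
    rw [Γ.sign_symm u a]
    linear_combination (-Γ.sign a u) * Γ.sign_mul_self hvu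
  by_cases hav : a = v
  · subst hav
    rw [Γ.sign_symm u a]
    linear_combination (-Γ.sign a b) * Γ.sign_mul_self hvu
  exact h4.sign_eq hvu hua hab hb.symm (Ne.symm hav) hub

lemma sign_eq_switchingAt_mul (h3 : Γ.NegC3Free) (h4 : Γ.NegC4Free) {v : Fin n}
    (hv : Γ.G.IsIndepSet {w | w ≠ v ∧ ¬Γ.G.Adj v w}) {a b : Fin n} (hab : Γ.G.Adj a b) :
    Γ.sign a b = Γ.switchingAt v a * Γ.switchingAt v b := by
  by_cases ha : Γ.G.Adj v a <;> by_cases hb : Γ.G.Adj v b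
  · rw [Γ.switchingAt_of_adj ha, Γ.switchingAt_of_adj hb]
    exact h3.sign_eq ha hab hb.symm
  · rw [Γ.sign_symm, mul_comm]
    exact sign_eq_switchingAt_mul_of_not_adj h4 hab.symm hb ha
  · exact sign_eq_switchingAt_mul_of_not_adj h4 hab ha hb
  · refine absurd hab (hv ⟨?_, ha⟩ ⟨?_, hb⟩ hab.ne)
    · rintro rfl
      exact hb hab
    · rintro rfl
      exact ha hab.symm

lemma not_unbalanced_of_isIndepSet (h3 : Γ.NegC3Free) (h4 : Γ.NegC4Free) {v : Fin n}
    (hv : Γ.G.IsIndepSet {w | w ≠ v ∧ ¬Γ.G.Adj v w}) : ¬Γ.Unbalanced :=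
  Γ.not_unbalanced_of_sign_eq_mul (Γ.switchingAt_mul_self v)
    fun _ _ => sign_eq_switchingAt_mul h3 h4 hv

open Classical in
lemma degree_add_three_le (hub : Γ.Unbalanced) (h3 : Γ.NegC3Free) (h4 : Γ.NegC4Free)
    (v : Fin n) : Γ.G.degree v + 3 ≤ n := by
  by_contra hlt
  refine not_unbalanced_of_isIndepSet h3 h4 (v := v) ?_ hub
  rintro a ⟨hav, hva⟩ b ⟨hbv, hvb⟩ hab -
  refine hlt ?_
  have := Γ.G.degree_add_card_le v {v, a, b} (by simp [hva, hvb])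
  rwa [Finset.card_insert_of_notMem (by simp [hav.symm, hbv.symm]), Finset.card_pair hab,
    Fintype.card_fin] at this

variable (Γ)

lemma adjMatrix_isHermitian : Γ.adjMatrix.IsHermitian := by
  ext i j
  by_cases h : Γ.G.Adj i j
  · simp [adjMatrix, h, h.symm, Γ.sign_symm j i]
  · simp [adjMatrix, h, mt Γ.G.adj_symm h]

open Classical in
lemma abs_adjMatrix_apply (i j : Fin n) : |Γ.adjMatrix i j| = Γ.G.adjMatrix ℝ i j := by
  by_cases h : Γ.G.Adj i j
  · rcases Γ.sign_pm i j h with hs | hs <;> simp [adjMatrix, h, hs]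
  · simp [adjMatrix, h]

open Classical in
lemma sum_abs_adjMatrix (i : Fin n) : ∑ j, |Γ.adjMatrix i j| = Γ.G.degree i := by
  simpa [abs_adjMatrix_apply, mulVec, dotProduct] using
    adjMatrix_mulVec_const_apply (G := Γ.G) (a := (1 : ℝ)) (v := i)

open Classical in
lemma lambda1_le_of_degree_le [NeZero n] {d : ℕ} (h : ∀ i, Γ.G.degree i ≤ d) :
    Γ.lambda1 ≤ d :=
  Real.sSup_le (fun _ hμ => le_of_mem_spectrum_of_forall_sum_abs_le
    (fun i => by rw [sum_abs_adjMatrix]; exact_mod_cast h i) hμ) d.cast_nonneg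

lemma dotProduct_mulVec_le_lambda1_mul [NeZero n] (y : Fin n → ℝ) :
    y ⬝ᵥ Γ.adjMatrix *ᵥ y ≤ Γ.lambda1 * (y ⬝ᵥ y) := by
  classical
  have hbdd : BddAbove (spectrum ℝ Γ.adjMatrix) := ⟨n, fun _ hμ =>
    le_of_mem_spectrum_of_forall_sum_abs_le (fun i => by
      rw [sum_abs_adjMatrix]; exact_mod_cast (Γ.G.degree_lt_card_verts i).le.trans (by simp)) hμ⟩
  exact dotProduct_mulVec_le_of_spectrum_le Γ.adjMatrix_isHermitian (fun _ => le_csSup hbdd) y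

end SignedGraph

lemma gamma1_unbalanced {n : ℕ} (hn : 3 ≤ n) : (Gamma1 n).Unbalanced :=
  (Gamma1 n).unbalanced_of_triangle (a := ⟨0, by omega⟩) (b := ⟨1, by omega⟩)
    (c := ⟨2, by omega⟩) (by simp [Gamma1]) (by simp [Gamma1]) (by simp [Gamma1]) (by simp [Gamma1])

/-- The only negative edge is `{0, 1}`, and `2` is the only other neighbour of either of its
ends, so no 4-cycle passes through it. -/
lemma gamma1_negC4Free (n : ℕ) : (Gamma1 n).NegC4Free := by
  intro u c hc hl hs
  rcases c with _ | ⟨h1, _ | ⟨h2, _ | ⟨h3, _ | ⟨h4, _ | ⟨h5, p⟩⟩⟩⟩⟩ <;> simp at hl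
  have hnodup := hc.support_nodup
  simp only [SignedGraph.walkSign_cons, SignedGraph.walkSign_nil] at hs
  simp [Gamma1, Fin.ext_iff] at hs h1 h2 h3 h4 hnodup
  split_ifs at hs <;> omega

open Matrix in
lemma sub_three_lt_lambda1_gamma1 {n : ℕ} (hn : 3 ≤ n) : (n : ℝ) - 3 < (Gamma1 n).lambda1 := by
  obtain ⟨m, rfl⟩ : ∃ m, n = m + 3 := ⟨n - 3, by omega⟩
  set c : ℝ := m + 1 with hc
  set y : Fin (m + 3) → ℝ := fun i => if (i : ℕ) < 2 then 1 else c
  have hoff (k : Fin m) : ∑ l : Fin m, (if k = l then (0 : ℝ) else c) = m * c - c := by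
    simp [Finset.sum_ite, Finset.filter_ne, Nat.cast_sub k.pos]
    ring
  have hQ : y ⬝ᵥ (Gamma1 (m + 3)).adjMatrix *ᵥ y = (m + 1) * m * c ^ 2 + 4 * c - 2 := by
    simp [y, dotProduct, mulVec, Fin.sum_univ_succ, SignedGraph.adjMatrix, Gamma1, hoff]
    simp (disch := omega) [Fin.ext_iff, Nat.mod_eq_of_lt]
    ring
  have hN : y ⬝ᵥ y = (m + 1) * c ^ 2 + 2 := by
    simp [y, dotProduct, Fin.sum_univ_succ]
    ring
  have hRayleigh := (Gamma1 (m + 3)).dotProduct_mulVec_le_lambda1_mul y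
  rw [hQ, hN] at hRayleigh
  push_cast
  by_contra! hle
  have := mul_le_mul_of_nonneg_right hle (by positivity : (0 : ℝ) ≤ (m + 1) * c ^ 2 + 2)
  linarith

theorem extremal_contains_negative_triangle_general
    (n : ℕ) (hn : 6 ≤ n) (Γ' : SignedGraph n)
    (hub : Γ'.Unbalanced) (hfree : Γ'.NegC4Free)
    (hmax : ∀ Γ : SignedGraph n, Γ.Unbalanced → Γ.NegC4Free → Γ.lambda1 ≤ Γ'.lambda1) :
    ∃ (u : Fin n) (c : Γ'.G.Walk u u), c.IsCycle ∧ c.length = 3 ∧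
      Γ'.walkSign c = -1 := by
  by_contra! h3
  have : NeZero n := ⟨by omega⟩
  have hΓ' : Γ'.lambda1 ≤ (n - 3 : ℕ) := by
    classical
    exact Γ'.lambda1_le_of_degree_le fun i => by
      have := Γ'.degree_add_three_le hub h3 hfree i
      omega
  have hΓ₁ := hmax (Gamma1 n) (gamma1_unbalanced (by omega)) (gamma1_negC4Free n)
  have := sub_three_lt_lambda1_gamma1 (n := n) (by omega)
  rw [Nat.cast_sub (by omega)] at hΓ'
  push_cast at hΓ'
  linarith

theorem extremal_contains_negative_triangle
    (n : ℕ) (hn : 6 ≤ n) (Γ' : SignedGraph n)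
    (hub : Γ'.Unbalanced) (hfree : Γ'.NegC4Free)
    (hmax : ∀ Γ : SignedGraph n, Γ.Unbalanced → Γ.NegC4Free → Γ.lambda1 ≤ Γ'.lambda1)
    (x : Fin n → ℝ) (hx : Γ'.adjMatrix.mulVec x = Γ'.lambda1 • x)
    (hnn : ∀ i, 0 ≤ x i) (hunit : ∑ i, x i ^ 2 = 1) :
    ∃ (u : Fin n) (c : Γ'.G.Walk u u), c.IsCycle ∧ c.length = 3 ∧
      Γ'.walkSign c = -1 :=
  extremal_contains_negative_triangle_general n hn Γ' hub hfree hmax
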